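/- Suppose q̄ ∈ ℝ^r has strictly positive entries and R(q̄) is robust positively invariant for x⁺ = A x + w, w ∈ W. Let Q = {q ∈ ℝ^r : 0 ≤ q ≤ q̄ componentwise}. Then for every q ∈ Q, the vector c(q) + d also lies in Q. -/

import Mathlib

/-!
For `x ∈ R(q) ⊆ R(q̄)` and `w ∈ W`, robust positive invariance gives
`P_i (A x) + P_i w ≤ q̄_i`. This pairwise bound makes both suprema finite and, taken over `x`
and `w` separately, gives `c_i(q) + d_i ≤ q̄_i`. Since `0 ∈ R(q)` and `0 ∈ W`, both suprema
are nonnegative.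
-/

open Matrix

/-- Support function `h(X, v) = sup {vᵀ x : x ∈ X}`. -/
noncomputable def suppFn {n : ℕ} (X : Set (Fin n → ℝ)) (v : Fin n → ℝ) : ℝ :=
  sSup ((fun x => v ⬝ᵥ x) '' X)

/-- `R(q) = {z : P z ≤ q}`. -/
def Rset {n r : ℕ} (P : Matrix (Fin r) (Fin n) ℝ) (q : Fin r → ℝ) : Set (Fin n → ℝ) :=
  {z : Fin n → ℝ | P.mulVec z ≤ q}

/-- `b_i(q) = h(R(q), P_iᵀ)`. -/
noncomputable def bfun {n r : ℕ} (P : Matrix (Fin r) (Fin n) ℝ) (q : Fin r → ℝ) :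
    Fin r → ℝ :=
  fun i => suppFn (Rset P q) (P i)

/-- `c_i(q) = h(A·R(q), P_iᵀ)`. -/
noncomputable def cfun {n r : ℕ} (A : Matrix (Fin n) (Fin n) ℝ)
    (P : Matrix (Fin r) (Fin n) ℝ) (q : Fin r → ℝ) : Fin r → ℝ :=
  fun i => suppFn (A.mulVec '' Rset P q) (P i)

/-- `d_i = h(W, P_iᵀ)` where `W = {w : F w ≤ g}`. -/
noncomputable def dvec {n r p : ℕ} (F : Matrix (Fin p) (Fin n) ℝ) (g : Fin p → ℝ)
    (P : Matrix (Fin r) (Fin n) ℝ) : Fin r → ℝ :=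
  fun i => suppFn {w : Fin n → ℝ | F.mulVec w ≤ g} (P i)

/-- `R` is robust positively invariant for `x⁺ = A x + w`, `w ∈ W`. -/
def IsRPI {n : ℕ} (A : Matrix (Fin n) (Fin n) ℝ) (W R : Set (Fin n → ℝ)) : Prop :=
  ∀ x ∈ R, ∀ w ∈ W, A.mulVec x + w ∈ R

section PairwiseBound

variable {M : Type*} [ConditionallyCompleteLattice M] [AddCommGroup M] [IsOrderedAddMonoid M]
  {S T : Set M} {a : M}

lemma bddAbove_of_forall_add_le (hT : T.Nonempty) (h : ∀ s ∈ S, ∀ t ∈ T, s + t ≤ a) :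
    BddAbove S := by
  obtain ⟨t, ht⟩ := hT
  exact ⟨a - t, fun s hs => le_sub_iff_add_le.2 (h s hs t ht)⟩

lemma csSup_add_csSup_le (hS : S.Nonempty) (hT : T.Nonempty)
    (h : ∀ s ∈ S, ∀ t ∈ T, s + t ≤ a) : sSup S + sSup T ≤ a := by
  have hTS : ∀ t ∈ T, ∀ s ∈ S, t + s ≤ a := fun t ht s hs => add_comm s t ▸ h s hs t ht
  rw [← csSup_add hS (bddAbove_of_forall_add_le hT h) hT (bddAbove_of_forall_add_le hS hTS)]
  exact csSup_le (hS.add hT) (by rintro _ ⟨s, hs, t, ht, rfl⟩; exact h s hs t ht)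

end PairwiseBound

section SupportFunction

variable {n : ℕ} {X Y : Set (Fin n → ℝ)} {v : Fin n → ℝ} {a : ℝ}

lemma forall_image_dotProduct_add_le (h : ∀ x ∈ X, ∀ y ∈ Y, v ⬝ᵥ x + v ⬝ᵥ y ≤ a) :
    ∀ s ∈ (v ⬝ᵥ ·) '' X, ∀ t ∈ (v ⬝ᵥ ·) '' Y, s + t ≤ a := by
  rintro _ ⟨x, hx, rfl⟩ _ ⟨y, hy, rfl⟩
  exact h x hx y hy

lemma suppFn_add_suppFn_le (hX : X.Nonempty) (hY : Y.Nonempty)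
    (h : ∀ x ∈ X, ∀ y ∈ Y, v ⬝ᵥ x + v ⬝ᵥ y ≤ a) : suppFn X v + suppFn Y v ≤ a :=
  csSup_add_csSup_le (hX.image _) (hY.image _) (forall_image_dotProduct_add_le h)

lemma suppFn_nonneg_of_forall_add_le (hX : (0 : Fin n → ℝ) ∈ X) (hY : Y.Nonempty)
    (h : ∀ x ∈ X, ∀ y ∈ Y, v ⬝ᵥ x + v ⬝ᵥ y ≤ a) : 0 ≤ suppFn X v :=
  le_csSup (bddAbove_of_forall_add_le (hY.image _) (forall_image_dotProduct_add_le h))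
    ⟨0, hX, dotProduct_zero v⟩

lemma suppFn_add_suppFn_nonneg (hX : (0 : Fin n → ℝ) ∈ X) (hY : (0 : Fin n → ℝ) ∈ Y)
    (h : ∀ x ∈ X, ∀ y ∈ Y, v ⬝ᵥ x + v ⬝ᵥ y ≤ a) : 0 ≤ suppFn X v + suppFn Y v :=
  add_nonneg (suppFn_nonneg_of_forall_add_le hX ⟨0, hY⟩ h)
    (suppFn_nonneg_of_forall_add_le hY ⟨0, hX⟩ fun y hy x hx => add_comm (v ⬝ᵥ x) _ ▸ h x hx y hy)

end SupportFunction

lemma Rset_mono {n r : ℕ} (P : Matrix (Fin r) (Fin n) ℝ) {q q' : Fin r → ℝ} (hq : q ≤ q') :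
    Rset P q ⊆ Rset P q' :=
  fun _ hz => (show _ ≤ q from hz).trans hq

lemma zero_mem_Rset {n r : ℕ} (P : Matrix (Fin r) (Fin n) ℝ) {q : Fin r → ℝ} (hq : 0 ≤ q) :
    0 ∈ Rset P q := by
  simpa [Rset] using hq

lemma IsRPI.dotProduct_add_le {n r : ℕ} {A : Matrix (Fin n) (Fin n) ℝ} {W : Set (Fin n → ℝ)}
    {P : Matrix (Fin r) (Fin n) ℝ} {qbar : Fin r → ℝ} (hRPI : IsRPI A W (Rset P qbar))
    {x w : Fin n → ℝ} (hx : x ∈ Rset P qbar) (hw : w ∈ W) (i : Fin r) :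
    P i ⬝ᵥ A *ᵥ x + P i ⬝ᵥ w ≤ qbar i := by
  simpa [mulVec_add, mulVec, dotProduct_add] using hRPI x hx w hw i

theorem cfun_add_dvec_mem_Q_general
    (n r p : ℕ)
    (A : Matrix (Fin n) (Fin n) ℝ)
    (F : Matrix (Fin p) (Fin n) ℝ) (g : Fin p → ℝ)
    (hg : ∀ j, 0 < g j)
    (W : Set (Fin n → ℝ)) (hW : W = {w : Fin n → ℝ | F.mulVec w ≤ g})
    (P : Matrix (Fin r) (Fin n) ℝ)
    (qbar : Fin r → ℝ)
    (hRPI : IsRPI A W (Rset P qbar)) :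
    ∀ q : Fin r → ℝ, 0 ≤ q → q ≤ qbar →
      0 ≤ cfun A P q + dvec F g P ∧ cfun A P q + dvec F g P ≤ qbar := by
  intro q hq0 hqle
  subst hW
  have h0W : (0 : Fin n → ℝ) ∈ {w : Fin n → ℝ | F *ᵥ w ≤ g} := by
    show F *ᵥ 0 ≤ g
    exact (mulVec_zero F).symm ▸ fun j => (hg j).le
  have h0AR : (0 : Fin n → ℝ) ∈ A.mulVec '' Rset P q := ⟨0, zero_mem_Rset P hq0, mulVec_zero A⟩
  have hbound : ∀ i, ∀ y ∈ A.mulVec '' Rset P q, ∀ w ∈ {w : Fin n → ℝ | F *ᵥ w ≤ g},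
      P i ⬝ᵥ y + P i ⬝ᵥ w ≤ qbar i := by
    rintro i _ ⟨x, hx, rfl⟩ w hw
    exact hRPI.dotProduct_add_le (Rset_mono P hqle hx) hw i
  exact ⟨fun i => suppFn_add_suppFn_nonneg h0AR h0W (hbound i),
    fun i => suppFn_add_suppFn_le ⟨0, h0AR⟩ ⟨0, h0W⟩ (hbound i)⟩

/-- if `R(q̄)` is RPI with `q̄ > 0`, then for every `q` with
`0 ≤ q ≤ q̄`, also `0 ≤ c(q) + d ≤ q̄`. -/
theorem cfun_add_dvec_mem_Q
    (n r p : ℕ)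
    (A : Matrix (Fin n) (Fin n) ℝ)
    (F : Matrix (Fin p) (Fin n) ℝ) (g : Fin p → ℝ)
    (hg : ∀ j, 0 < g j)
    (W : Set (Fin n → ℝ)) (hW : W = {w : Fin n → ℝ | F.mulVec w ≤ g})
    (hWcompact : IsCompact W)
    (P : Matrix (Fin r) (Fin n) ℝ)
    (hspan : Submodule.span ℝ (Set.range fun i => P i) = ⊤)
    (hP0 : {z : Fin n → ℝ | P.mulVec z ≤ 0} = {0})
    (qbar : Fin r → ℝ) (hqbar : ∀ i, 0 < qbar i)
    (hRPI : IsRPI A W (Rset P qbar)) :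
    ∀ q : Fin r → ℝ, 0 ≤ q → q ≤ qbar →
      0 ≤ cfun A P q + dvec F g P ∧ cfun A P q + dvec F g P ≤ qbar :=
  cfun_add_dvec_mem_Q_general n r p A F g hg W hW P qbar hRPI
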